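/- Let r, h be nonzero real numbers and let v be a real number with |v| > √(|r·h|). Then the series u = Σ_{i=0}^∞ c_i r^{i+1} (−h)^i (1/(2v))^{2i+1} converges absolutely, and its sum u satisfies h·u² + 2·u·v = r. In particular, for each such v the pair (u, v) solves the equation r = hu² + 2uv arising from the condition ω²(p*η) = r(Θp*H)(p*η) on a fibration. -/

import Mathlib

/-!
Put `w = 1 / (2v)` and `x = -r h w²`. The `i`-th term of the series is `r w · cᵢ xⁱ`, so
`u = r w C(x)` with `C` the Catalan generating function. The hypothesis on `v` is `|x| < 1/4`, and
`cᵢ ≤ 4ⁱ` makes the series converge absolutely there; the Cauchy product together with the Catalan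
recurrence gives `C = 1 + x C²`, whence `h u² + 2 u v = r (C - x C²) = r`.
-/

theorem catalan_le_four_pow (n : ℕ) : catalan n ≤ 4 ^ n :=
  calc catalan n ≤ n.centralBinom := by
        rw [catalan_eq_centralBinom_div]; exact Nat.div_le_self _ _
    _ ≤ 4 ^ n := Nat.centralBinom_le_four_pow n

section CatalanSeries

variable {𝕜 : Type*} [NormedField 𝕜] {x : 𝕜}

theorem summable_norm_catalan_mul_pow (hx : ‖x‖ < 1 / 4) :
    Summable fun n => ‖(catalan n : 𝕜) * x ^ n‖ := by
  refine .of_nonneg_of_le (fun _ => norm_nonneg _) (fun n => ?_)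
    (summable_geometric_of_lt_one (by positivity) (by linarith : 4 * ‖x‖ < 1))
  calc ‖(catalan n : 𝕜) * x ^ n‖ ≤ catalan n * ‖x‖ ^ n := by
        rw [norm_mul, norm_pow]; gcongr; simpa using Nat.norm_cast_le (α := 𝕜) (catalan n)
    _ ≤ 4 ^ n * ‖x‖ ^ n := by gcongr; exact_mod_cast catalan_le_four_pow n
    _ = (4 * ‖x‖) ^ n := (mul_pow _ _ _).symm

theorem catalan_mul_pow_succ (n : ℕ) (x : 𝕜) :
    (catalan (n + 1) : 𝕜) * x ^ (n + 1) =
      x * ∑ p ∈ Finset.HasAntidiagonal.antidiagonal n,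
        (catalan p.1 * x ^ p.1) * (catalan p.2 * x ^ p.2) := by
  rw [catalan_succ', Nat.cast_sum, Finset.sum_mul, Finset.mul_sum]
  refine Finset.sum_congr rfl fun p hp => ?_
  rw [← Finset.HasAntidiagonal.mem_antidiagonal.mp hp]
  push_cast; ring

theorem tsum_catalan_mul_pow_eq_one_add_mul_sq [CompleteSpace 𝕜] (hx : ‖x‖ < 1 / 4) :
    ∑' n, (catalan n : 𝕜) * x ^ n = 1 + x * (∑' n, (catalan n : 𝕜) * x ^ n) ^ 2 := by
  have hnorm := summable_norm_catalan_mul_pow hx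
  rw [sq, tsum_mul_tsum_eq_tsum_sum_antidiagonal_of_summable_norm hnorm hnorm, ← tsum_mul_left,
    hnorm.of_norm.tsum_eq_zero_add]
  simp only [catalan_mul_pow_succ, catalan_zero, Nat.cast_one, pow_zero, mul_one]

end CatalanSeries

theorem catalan_series_solves_fibration_equation_general (r h v : ℝ)
    (hv : Real.sqrt |r * h| < |v|) :
    Summable (fun i : ℕ =>
      |(catalan i : ℝ) * r ^ (i + 1) * (-h) ^ i * (1 / (2 * v)) ^ (2 * i + 1)|) ∧
    h * (∑' i : ℕ,
        (catalan i : ℝ) * r ^ (i + 1) * (-h) ^ i * (1 / (2 * v)) ^ (2 * i + 1)) ^ 2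
      + 2 * (∑' i : ℕ,
        (catalan i : ℝ) * r ^ (i + 1) * (-h) ^ i * (1 / (2 * v)) ^ (2 * i + 1)) * v
      = r := by
  have hv_pos : 0 < |v| := (Real.sqrt_nonneg _).trans_lt hv
  have hwv : 1 / (2 * v) * (2 * v) = 1 := one_div_mul_cancel (by simpa using hv_pos.ne')
  generalize 1 / (2 * v) = w at hwv ⊢
  set x : ℝ := r * (-h) * w ^ 2 with hx_def
  have hx : ‖x‖ < 1 / 4 := by
    have hrh : |r * h| < v ^ 2 := sq_abs v ▸ (Real.sqrt_lt' hv_pos).mp hv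
    have hx_norm : ‖x‖ = |r * h| * w ^ 2 := by
      rw [Real.norm_eq_abs, hx_def, abs_mul, abs_of_nonneg (sq_nonneg w), mul_neg, abs_neg]
    rw [hx_norm]
    have hw0 : w ≠ 0 := left_ne_zero_of_mul_eq_one hwv
    nlinarith [mul_lt_mul_of_pos_right hrh (by positivity : 0 < w ^ 2)]
  have hterm (i : ℕ) : (catalan i : ℝ) * r ^ (i + 1) * (-h) ^ i * w ^ (2 * i + 1)
      = r * w * ((catalan i : ℝ) * x ^ i) := by
    rw [hx_def]; ring
  simp only [hterm, tsum_mul_left]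
  refine ⟨?_, ?_⟩
  · simpa only [abs_mul, Real.norm_eq_abs] using (summable_norm_catalan_mul_pow hx).mul_left |r * w|
  · have hC := tsum_catalan_mul_pow_eq_one_add_mul_sq hx
    set C := ∑' n, (catalan n : ℝ) * x ^ n
    linear_combination r * hC + r * C * hwv + r * C ^ 2 * hx_def

/-- For nonzero reals `r, h` and real `v` with `|v| > √|r·h|`, the
series `u = Σ_{i=0}^∞ c_i r^{i+1} (−h)^i (1/(2v))^{2i+1}` converges absolutely,
and its sum `u` satisfies `h·u² + 2·u·v = r`. -/
theorem catalan_series_solves_fibration_equation (r h v : ℝ) (hr : r ≠ 0) (hh : h ≠ 0)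
    (hv : Real.sqrt |r * h| < |v|) :
    Summable (fun i : ℕ =>
      |(catalan i : ℝ) * r ^ (i + 1) * (-h) ^ i * (1 / (2 * v)) ^ (2 * i + 1)|) ∧
    h * (∑' i : ℕ,
        (catalan i : ℝ) * r ^ (i + 1) * (-h) ^ i * (1 / (2 * v)) ^ (2 * i + 1)) ^ 2
      + 2 * (∑' i : ℕ,
        (catalan i : ℝ) * r ^ (i + 1) * (-h) ^ i * (1 / (2 * v)) ^ (2 * i + 1)) * v
      = r :=
  catalan_series_solves_fibration_equation_general r h v hv
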